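/- Let μ be a probability measure on ℝⁿ, and let f, f̂ : ℝⁿ → ℝ be differentiable with gradients ∇f, ∇f̂ square-integrable with respect to μ. Suppose there are constants ω_h ≥ 0 and γ_f ≥ 0 such that for μ-almost every x, ‖∇f̂(x) − ∇f(x)‖ ≤ ω_h and ‖∇f(x)‖ ≤ γ_f (where ‖·‖ is the Euclidean norm). Define the covariance matrices C = ∫ ∇f(x)∇f(x)ᵀ dμ(x) and Ĉ = ∫ ∇f̂(x)∇f̂(x)ᵀ dμ(x). Then, in the operator norm induced by the Euclidean norm, ‖C − Ĉ‖ ≤ (ω_h + 2γ_f) ω_h. -/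

import Mathlib

open MeasureTheory Matrix
open scoped RealInnerProductSpace

/-! Writing `x ⊗ y` for the rank-one operator `z ↦ ⟪y, z⟫ x`, both matrices are second-moment
operators `∫ g ⊗ g dμ` of `L²` functions, and `g ⊗ g - ĝ ⊗ ĝ = (g - ĝ) ⊗ g + ĝ ⊗ (g - ĝ)`.
Since `‖x ⊗ y‖ = ‖x‖ ‖y‖`, the integrand has operator norm at most `ω_h (γ_f + (γ_f + ω_h))`
almost everywhere, and integrating against a probability measure keeps this bound. -/

open InnerProductSpace

section SecondMoment

variable {α E : Type*} [MeasurableSpace α] {μ : Measure α}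
  [NormedAddCommGroup E] [InnerProductSpace ℝ E]

noncomputable def secondMoment (μ : Measure α) (g : α → E) : E →L[ℝ] E :=
  ∫ x, rankOne ℝ (g x) (g x) ∂μ

lemma MeasureTheory.MemLp.integrable_rankOne_self {g : α → E} (hg : MemLp g 2 μ) :
    Integrable (fun x => rankOne ℝ (g x) (g x)) μ := by
  refine (hg.integrable_norm_pow two_ne_zero).mono'
    ((rankOne ℝ (E := E) (F := E)).continuous₂.comp_aestronglyMeasurable₂ hg.1 hg.1) ?_
  filter_upwards with x
  simp [sq]

lemma norm_rankOne_self_sub_rankOne_self_le (g h : E) :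
    ‖rankOne ℝ g g - rankOne ℝ h h‖ ≤ ‖g - h‖ * (‖g‖ + ‖h‖) := by
  have hsplit :
      rankOne ℝ g g - rankOne ℝ h h = rankOne ℝ (g - h) g + rankOne ℝ h (g - h) := by
    simp only [map_sub, _root_.sub_apply]; abel
  rw [hsplit]
  exact (norm_add_le _ _).trans_eq (by simp only [norm_rankOne]; ring)

lemma norm_secondMoment_sub_le [IsProbabilityMeasure μ] {g h : α → E}
    (hg : MemLp g 2 μ) (hh : MemLp h 2 μ) {ω γ : ℝ}
    (hω : ∀ᵐ x ∂μ, ‖h x - g x‖ ≤ ω) (hγ : ∀ᵐ x ∂μ, ‖g x‖ ≤ γ) :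
    ‖secondMoment μ g - secondMoment μ h‖ ≤ (ω + 2 * γ) * ω := by
  rw [secondMoment, secondMoment, ← integral_sub hg.integrable_rankOne_self
    hh.integrable_rankOne_self]
  have bound :
      ∀ᵐ x ∂μ, ‖rankOne ℝ (g x) (g x) - rankOne ℝ (h x) (h x)‖ ≤ (ω + 2 * γ) * ω := by
    filter_upwards [hω, hγ] with x hωx hγx
    have hhx : ‖h x‖ ≤ γ + ω :=
      (norm_le_norm_add_norm_sub' (h x) (g x)).trans (add_le_add hγx hωx)
    calc _ ≤ ‖g x - h x‖ * (‖g x‖ + ‖h x‖) :=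
          norm_rankOne_self_sub_rankOne_self_le _ _
      _ ≤ ω * (γ + (γ + ω)) := by
          rw [norm_sub_rev]
          exact mul_le_mul hωx (add_le_add hγx hhx) (by positivity) ((norm_nonneg _).trans hωx)
      _ = _ := by ring
  simpa using norm_integral_le_of_norm_le_const bound

end SecondMoment

lemma toEuclideanCLM_eq_secondMoment {α ι : Type*} [MeasurableSpace α] [Fintype ι]
    [DecidableEq ι] {μ : Measure α} {g : α → EuclideanSpace ℝ ι} (hg : MemLp g 2 μ)
    {C : Matrix ι ι ℝ} (hC : ∀ i j, C i j = ∫ x, g x i * g x j ∂μ) :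
    toEuclideanCLM (𝕜 := ℝ) C = secondMoment μ g := by
  let b := (EuclideanSpace.basisFun ι ℝ).toBasis
  refine ContinuousLinearMap.coe_injective <| b.ext fun j => ext_inner_left_basis b fun i => ?_
  simp only [b, OrthonormalBasis.coe_toBasis, EuclideanSpace.basisFun_apply,
    ContinuousLinearMap.coe_coe]
  rw [secondMoment, ContinuousLinearMap.integral_apply hg.integrable_rankOne_self,
    ← integral_inner (hg.integrable_rankOne_self.apply_continuousLinearMap _)]
  simp [hC, inner_smul_right, EuclideanSpace.inner_single_left,
    EuclideanSpace.inner_single_right, mul_comm]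

theorem covariance_matrix_error_bound_general {n : ℕ}
    (μ : Measure (EuclideanSpace ℝ (Fin n))) [IsProbabilityMeasure μ]
    (gradF gradFhat : EuclideanSpace ℝ (Fin n) → EuclideanSpace ℝ (Fin n))
    (hL2 : MemLp gradF 2 μ) (hL2hat : MemLp gradFhat 2 μ)
    (ωh γf : ℝ)
    (hbound : ∀ᵐ x ∂μ, ‖gradFhat x - gradF x‖ ≤ ωh)
    (hgradbound : ∀ᵐ x ∂μ, ‖gradF x‖ ≤ γf)
    (C Chat : Matrix (Fin n) (Fin n) ℝ)
    (hC : ∀ i j, C i j = ∫ x, gradF x i * gradF x j ∂μ)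
    (hChat : ∀ i j, Chat i j = ∫ x, gradFhat x i * gradFhat x j ∂μ) :
    ‖Matrix.toEuclideanCLM (𝕜 := ℝ) (C - Chat)‖ ≤ (ωh + 2 * γf) * ωh := by
  rw [map_sub, toEuclideanCLM_eq_secondMoment hL2 hC,
    toEuclideanCLM_eq_secondMoment hL2hat hChat]
  exact norm_secondMoment_sub_le hL2 hL2hat hbound hgradbound

/-- If `‖∇f̂(x) − ∇f(x)‖ ≤ ω_h` and `‖∇f(x)‖ ≤ γ_f` for μ-almost every `x`, then the
gradient covariance matrices `C = ∫ ∇f ∇fᵀ dμ` and `Ĉ = ∫ ∇f̂ ∇f̂ᵀ dμ` satisfy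
`‖C − Ĉ‖ ≤ (ω_h + 2γ_f) ω_h` in the operator norm induced by the Euclidean norm. -/
theorem covariance_matrix_error_bound {n : ℕ}
    (μ : Measure (EuclideanSpace ℝ (Fin n))) [IsProbabilityMeasure μ]
    (f fhat : EuclideanSpace ℝ (Fin n) → ℝ)
    (gradF gradFhat : EuclideanSpace ℝ (Fin n) → EuclideanSpace ℝ (Fin n))
    (hf : ∀ x, HasGradientAt f (gradF x) x)
    (hfhat : ∀ x, HasGradientAt fhat (gradFhat x) x)
    (hL2 : MemLp gradF 2 μ) (hL2hat : MemLp gradFhat 2 μ)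
    (ωh γf : ℝ) (hω : 0 ≤ ωh) (hγ : 0 ≤ γf)
    (hbound : ∀ᵐ x ∂μ, ‖gradFhat x - gradF x‖ ≤ ωh)
    (hgradbound : ∀ᵐ x ∂μ, ‖gradF x‖ ≤ γf)
    (C Chat : Matrix (Fin n) (Fin n) ℝ)
    (hC : ∀ i j, C i j = ∫ x, gradF x i * gradF x j ∂μ)
    (hChat : ∀ i j, Chat i j = ∫ x, gradFhat x i * gradFhat x j ∂μ) :
    ‖Matrix.toEuclideanCLM (𝕜 := ℝ) (C - Chat)‖ ≤ (ωh + 2 * γf) * ωh :=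
  covariance_matrix_error_bound_general μ gradF gradFhat hL2 hL2hat ωh γf hbound hgradbound C Chat
    hC hChat
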